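/- arXiv:2008.07317 — 5 statements merged into one kernel-verified Lean document; each statement's English description precedes it below -/
import Mathlib

section
/- Suppose x_i(0) ∈ [0,1] for all i ∈ [n]. Then, under Assumptions 1 and 2, every solution of the discrete-time time-varying SIS model satisfies x_i(k) ∈ [0,1] for all i ∈ [n] and all k ∈ ℤ≥0; that is, the set [0,1]ⁿ is positively invariant for the dynamics. -/
/-- Lemma 1: positive invariance of `[0,1]ⁿ` for the discrete-time time-varying SIS model
`x(k+1) = x(k) + h((I − X(k)) B̄(k) − D(k)) x(k)` under Assumptions 1 and 2. -/
theorem sis_positively_invariant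
    (n : ℕ) (h : ℝ) (hh : 0 < h)
    (δ : ℕ → Fin n → ℝ) (Bbar : ℕ → Matrix (Fin n) (Fin n) ℝ)
    -- Assumption 1
    (hA1δ : ∀ k i, 0 ≤ h * δ k i)
    (hA1B : ∀ k i j, 0 ≤ Bbar k i j)
    -- Assumption 2
    (hA2δ : ∀ k i, h * δ k i ≤ 1)
    (hA2B : ∀ k i, h * ∑ j, Bbar k i j ≤ 1)
    -- a solution of the SIS dynamics
    (x : ℕ → Fin n → ℝ)
    (hdyn : ∀ k i, x (k + 1) i =
      x k i + h * ((1 - x k i) * (∑ j, Bbar k i j * x k j) - δ k i * x k i))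
    -- initial condition in [0,1]ⁿ
    (hx0 : ∀ i, x 0 i ∈ Set.Icc (0 : ℝ) 1) :
    ∀ k i, x k i ∈ Set.Icc (0 : ℝ) 1 := by
  intro k
  induction k with
  | zero => exact hx0
  | succ k ih =>
    intro i
    obtain ⟨h0, h1⟩ := ih i
    have hS0 : (0 : ℝ) ≤ ∑ j, Bbar k i j * x k j :=
      Finset.sum_nonneg fun j _ => mul_nonneg (hA1B k i j) (ih j).1
    have hS1 : h * ∑ j, Bbar k i j * x k j ≤ 1 := by
      refine le_trans ?_ (hA2B k i)
      rw [Finset.mul_sum, Finset.mul_sum]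
      refine Finset.sum_le_sum fun j _ => ?_
      exact mul_le_mul_of_nonneg_left
        (mul_le_of_le_one_right (hA1B k i j) (ih j).2) hh.le
    constructor
    · rw [hdyn]
      have := hA2δ k i
      nlinarith [mul_nonneg hh.le hS0]
    · rw [hdyn]
      have := hA1δ k i
      nlinarith [mul_nonneg hh.le hS0]
end

section
/- (Theorem 1) Let Assumptions 1 and 2 hold. Suppose that for all k ∈ ℤ≥0, β_i(k) = β(k) for every i ∈ [n] (homogeneous infection rates) and A(k) is symmetric. If sup_{k ∈ ℤ≥0} ρ(M(k)) < 1, where ρ denotes the spectral radius, then the healthy state x = 0 of the SIS model is globally exponentially stable: there exist α > 0 and ω ∈ [0,1) such that every solution with x(k₀) ∈ [0,1]ⁿ satisfies ‖x(k)‖ ≤ α‖x(k₀)‖ω^{k−k₀} for all k ≥ k₀. -/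
/-!
Because the state stays in `[0,1]ⁿ` and all coefficients are nonnegative, dropping the quadratic
term `-h xᵢ (B̄x)ᵢ` gives the componentwise linear bound `0 ≤ x(k+1) ≤ M(k) x(k)`. With
homogeneous infection rates and a symmetric graph, `M(k)` is symmetric, so its Euclidean operator
norm equals its spectral radius. Hence `‖x(k+1)‖ ≤ ρ(M(k)) ‖x(k)‖`, and the state decays
geometrically with `α = 1` and `ω = max r 0`, where `r < 1` bounds every `ρ(M(k))`.
-/

/-- Spectral radius of a real matrix: largest modulus of its complex eigenvalues. -/
noncomputable def specRad {n : ℕ} (M : Matrix (Fin n) (Fin n) ℝ) : ℝ :=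
  sSup {r : ℝ | ∃ μ ∈ spectrum ℂ (M.map Complex.ofReal), r = ‖μ‖}

/-- Euclidean norm on `ℝⁿ`. -/
noncomputable def euclNorm {n : ℕ} (x : Fin n → ℝ) : ℝ := Real.sqrt (∑ i, (x i) ^ 2)

open Matrix

section EuclNorm

variable {n : ℕ}

lemma euclNorm_eq_norm_toLp (x : Fin n → ℝ) : euclNorm x = ‖WithLp.toLp 2 x‖ := by
  simp [euclNorm, EuclideanSpace.norm_eq]

lemma euclNorm_le_euclNorm {y z : Fin n → ℝ} (hy : ∀ i, 0 ≤ y i) (hyz : ∀ i, y i ≤ z i) :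
    euclNorm y ≤ euclNorm z :=
  Real.sqrt_le_sqrt <| Finset.sum_le_sum fun i _ => pow_le_pow_left₀ (hy i) (hyz i) 2

lemma euclNorm_nonneg (y : Fin n → ℝ) : 0 ≤ euclNorm y := Real.sqrt_nonneg _

end EuclNorm

namespace Matrix

variable {n : ℕ}

lemma ofReal_mem_spectrum_map_ofReal {M : Matrix (Fin n) (Fin n) ℝ} {μ : ℝ}
    (hμ : μ ∈ spectrum ℝ M) : (μ : ℂ) ∈ spectrum ℂ (M.map Complex.ofReal) := by
  rw [mem_spectrum_iff_isRoot_charpoly] at hμ ⊢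
  have := hμ.map (f := Complex.ofRealHom)
  rwa [← charpoly_map] at this

lemma abs_le_specRad {M : Matrix (Fin n) (Fin n) ℝ} {μ : ℝ} (hμ : μ ∈ spectrum ℝ M) :
    |μ| ≤ specRad M := by
  have hbdd : BddAbove {r : ℝ | ∃ μ ∈ spectrum ℂ (M.map Complex.ofReal), r = ‖μ‖} := by
    refine ((M.map Complex.ofReal).finite_spectrum.image (‖·‖)).bddAbove.mono ?_
    rintro r ⟨μ, hμ, rfl⟩
    exact ⟨μ, hμ, rfl⟩
  exact le_csSup hbdd ⟨μ, ofReal_mem_spectrum_map_ofReal hμ, by simp⟩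

lemma specRad_nonneg (M : Matrix (Fin n) (Fin n) ℝ) : 0 ≤ specRad M :=
  Real.sSup_nonneg <| by rintro r ⟨μ, -, rfl⟩; exact norm_nonneg μ

lemma spectralRadius_le_specRad (M : Matrix (Fin n) (Fin n) ℝ) :
    spectralRadius ℝ M ≤ ENNReal.ofReal (specRad M) :=
  iSup₂_le fun μ hμ => by
    rw [← enorm_eq_nnnorm, ← ofReal_norm]
    exact ENNReal.ofReal_le_ofReal (abs_le_specRad hμ)

lemma IsSymm.euclNorm_mulVec_le {M : Matrix (Fin n) (Fin n) ℝ} (hM : M.IsSymm)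
    (v : Fin n → ℝ) : euclNorm (M *ᵥ v) ≤ specRad M * euclNorm v := by
  set T := toEuclideanCLM (n := Fin n) (𝕜 := ℝ) M
  have hT : IsSelfAdjoint T := (isHermitian_iff_isSymm.mpr hM).isSelfAdjoint.map _
  have hnorm : ‖T‖ ≤ specRad M := by
    rw [← ENNReal.ofReal_le_ofReal_iff (specRad_nonneg M), ofReal_norm, enorm_eq_nnnorm,
      ← T.spectralRadius_eq_nnnorm hT]
    simpa only [spectralRadius, T, AlgEquiv.spectrum_eq] using spectralRadius_le_specRad M
  rw [euclNorm_eq_norm_toLp, euclNorm_eq_norm_toLp, ← toEuclideanCLM_toLp]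
  exact T.le_of_opNorm_le hnorm _

end Matrix

section SIS

variable {ι : Type*} [Fintype ι]

/-- The SIS update `x ↦ x + h ((I - X) B̄ - D) x`. -/
def sisStep (h : ℝ) (B : Matrix ι ι ℝ) (δ : ι → ℝ) (y : ι → ℝ) : ι → ℝ :=
  fun i => y i + h * ((1 - y i) * (B *ᵥ y) i - δ i * y i)

variable {h : ℝ} {B : Matrix ι ι ℝ} {δ : ι → ℝ} {y : ι → ℝ}

lemma mulVec_apply_nonneg {i : ι} (hB : ∀ j, 0 ≤ B i j) (hy : ∀ j, 0 ≤ y j) :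
    0 ≤ (B *ᵥ y) i :=
  Finset.sum_nonneg fun j _ => mul_nonneg (hB j) (hy j)

lemma mulVec_apply_le_sum {i : ι} (hB : ∀ j, 0 ≤ B i j) (hy : ∀ j, y j ≤ 1) :
    (B *ᵥ y) i ≤ ∑ j, B i j :=
  Finset.sum_le_sum fun j _ => mul_le_of_le_one_right (hB j) (hy j)

lemma sisStep_apply_eq (i : ι) :
    sisStep h B δ y i = y i * (1 - h * δ i) + (1 - y i) * (h * (B *ᵥ y) i) := by
  simp only [sisStep]; ring

lemma sisStep_nonneg (hh : 0 ≤ h) (hδ₁ : ∀ i, h * δ i ≤ 1) (hB₀ : ∀ i j, 0 ≤ B i j)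
    (hy : ∀ i, y i ∈ Set.Icc 0 1) (i : ι) : 0 ≤ sisStep h B δ y i := by
  obtain ⟨hy₀, hy₁⟩ := hy i
  have hS₀ : 0 ≤ h * (B *ᵥ y) i := mul_nonneg hh (mulVec_apply_nonneg (hB₀ i) fun j => (hy j).1)
  rw [sisStep_apply_eq]
  exact add_nonneg (mul_nonneg hy₀ (sub_nonneg.2 (hδ₁ i))) (mul_nonneg (sub_nonneg.2 hy₁) hS₀)

lemma sisStep_mem_Icc (hh : 0 ≤ h) (hδ₀ : ∀ i, 0 ≤ h * δ i) (hδ₁ : ∀ i, h * δ i ≤ 1)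
    (hB₀ : ∀ i j, 0 ≤ B i j) (hB₁ : ∀ i, h * ∑ j, B i j ≤ 1) (hy : ∀ i, y i ∈ Set.Icc 0 1)
    (i : ι) : sisStep h B δ y i ∈ Set.Icc 0 1 := by
  refine ⟨sisStep_nonneg hh hδ₁ hB₀ hy i, ?_⟩
  have hS₁ : h * (B *ᵥ y) i ≤ 1 :=
    (mul_le_mul_of_nonneg_left (mulVec_apply_le_sum (hB₀ i) fun j => (hy j).2) hh).trans (hB₁ i)
  obtain ⟨hy₀, hy₁⟩ := hy i
  calc sisStep h B δ y i = y i * (1 - h * δ i) + (1 - y i) * (h * (B *ᵥ y) i) :=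
        sisStep_apply_eq i
    _ ≤ y i * 1 + (1 - y i) * 1 :=
        add_le_add (mul_le_mul_of_nonneg_left (by linarith [hδ₀ i]) hy₀)
          (mul_le_mul_of_nonneg_left hS₁ (sub_nonneg.2 hy₁))
    _ = 1 := by ring

variable [DecidableEq ι]

lemma sisStep_le_mulVec (hh : 0 ≤ h) (hB₀ : ∀ i j, 0 ≤ B i j) (hy : ∀ i, 0 ≤ y i) (i : ι) :
    sisStep h B δ y i ≤ ((1 - h • diagonal δ + h • B) *ᵥ y) i := by
  have hlin : ((1 - h • diagonal δ + h • B) *ᵥ y) i = y i - h * (δ i * y i) + h * (B *ᵥ y) i := by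
    simp [add_mulVec, sub_mulVec, smul_mulVec, mulVec_diagonal]
  have hquad : 0 ≤ h * y i * (B *ᵥ y) i :=
    mul_nonneg (mul_nonneg hh (hy i)) (mulVec_apply_nonneg (hB₀ i) hy)
  rw [hlin, sisStep]
  linarith

end SIS

lemma euclNorm_sisStep_le {n : ℕ} {h : ℝ} {B : Matrix (Fin n) (Fin n) ℝ} {δ : Fin n → ℝ}
    {y : Fin n → ℝ} (hh : 0 ≤ h) (hδ₁ : ∀ i, h * δ i ≤ 1) (hB₀ : ∀ i j, 0 ≤ B i j)
    (hsymm : (1 - h • diagonal δ + h • B).IsSymm) (hy : ∀ i, y i ∈ Set.Icc 0 1) :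
    euclNorm (sisStep h B δ y) ≤ specRad (1 - h • diagonal δ + h • B) * euclNorm y :=
  calc euclNorm (sisStep h B δ y)
      ≤ euclNorm ((1 - h • diagonal δ + h • B) *ᵥ y) :=
        euclNorm_le_euclNorm (sisStep_nonneg hh hδ₁ hB₀ hy)
          (sisStep_le_mulVec hh hB₀ fun i => (hy i).1)
    _ ≤ _ := hsymm.euclNorm_mulVec_le y

theorem sis_homogeneous_GES_general
    (n : ℕ) (h : ℝ) (hh : 0 < h)
    (β : ℕ → ℝ) (A : ℕ → Matrix (Fin n) (Fin n) ℝ) (δ : ℕ → Fin n → ℝ)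
    (Bbar : ℕ → Matrix (Fin n) (Fin n) ℝ)
    (hBbar : ∀ k, Bbar k = β k • A k)
    -- homogeneous infection rates and symmetric graph
    (hAsym : ∀ k, (A k).IsSymm)
    -- Assumption 1
    (hA1δ : ∀ k i, 0 ≤ h * δ k i)
    (hA1B : ∀ k i j, 0 ≤ Bbar k i j)
    -- Assumption 2
    (hA2δ : ∀ k i, h * δ k i ≤ 1)
    (hA2B : ∀ k i, h * ∑ j, Bbar k i j ≤ 1)
    -- M(k) = I − hD(k) + hB̄(k)
    (M : ℕ → Matrix (Fin n) (Fin n) ℝ)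
    (hM : ∀ k, M k = 1 - h • Matrix.diagonal (δ k) + h • Bbar k)
    -- sup_k ρ(M(k)) < 1
    (hρ : ∃ r : ℝ, r < 1 ∧ ∀ k, specRad (M k) ≤ r) :
    ∃ α : ℝ, 0 < α ∧ ∃ ω : ℝ, 0 ≤ ω ∧ ω < 1 ∧
      ∀ x : ℕ → Fin n → ℝ,
        (∀ k i, x (k + 1) i =
          x k i + h * ((1 - x k i) * (∑ j, Bbar k i j * x k j) - δ k i * x k i)) →
        ∀ k₀ : ℕ, (∀ i, x k₀ i ∈ Set.Icc (0 : ℝ) 1) →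
          ∀ k, k₀ ≤ k → euclNorm (x k) ≤ α * euclNorm (x k₀) * ω ^ (k - k₀) := by
  obtain ⟨r, hr₁, hr⟩ := hρ
  refine ⟨1, one_pos, max r 0, le_max_right r 0, max_lt hr₁ one_pos, ?_⟩
  intro x hx k₀ hx₀
  have hstep : ∀ k, x (k + 1) = sisStep h (Bbar k) (δ k) (x k) := fun k => funext (hx k)
  have hbox : ∀ k, k₀ ≤ k → ∀ i, x k i ∈ Set.Icc (0 : ℝ) 1 := by
    intro k hk
    induction k, hk using Nat.le_induction with
    | base => exact hx₀
    | succ k _ ih =>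
      rw [hstep]
      exact sisStep_mem_Icc hh.le (hA1δ k) (hA2δ k) (hA1B k) (hA2B k) ih
  have hcontract : ∀ k, k₀ ≤ k → euclNorm (x (k + 1)) ≤ max r 0 * euclNorm (x k) := by
    intro k hk
    have hsymm : (M k).IsSymm := by
      rw [hM, hBbar]
      exact (isSymm_one.sub ((isSymm_diagonal _).smul h)).add (((hAsym k).smul _).smul h)
    have hρk : specRad (M k) ≤ max r 0 := (hr k).trans (le_max_left r 0)
    rw [hM] at hsymm hρk
    rw [hstep]
    exact (euclNorm_sisStep_le hh.le (hA2δ k) (hA1B k) hsymm (hbox k hk)).trans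
      (mul_le_mul_of_nonneg_right hρk (euclNorm_nonneg _))
  intro k hk
  have hgeom := le_geom (u := fun m => euclNorm (x (k₀ + m))) (le_max_right r 0) (k - k₀)
    fun m _ => hcontract (k₀ + m) (Nat.le_add_right k₀ m)
  simpa [Nat.add_sub_cancel' hk, mul_comm] using hgeom

/-- Theorem 1: for homogeneous infection rates over symmetric graphs, under Assumptions 1
and 2, if `sup_k ρ(M(k)) < 1` then the healthy state of the SIS model is GES. -/
theorem sis_homogeneous_GES
    (n : ℕ) (h : ℝ) (hh : 0 < h)
    (β : ℕ → ℝ) (A : ℕ → Matrix (Fin n) (Fin n) ℝ) (δ : ℕ → Fin n → ℝ)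
    (Bbar : ℕ → Matrix (Fin n) (Fin n) ℝ)
    (hBbar : ∀ k, Bbar k = β k • A k)
    -- homogeneous infection rates and symmetric graph
    (hβpos : ∀ k, 0 < β k)
    (hAsym : ∀ k, (A k).IsSymm)
    -- Assumption 1
    (hA1δ : ∀ k i, 0 ≤ h * δ k i)
    (hA1B : ∀ k i j, 0 ≤ Bbar k i j)
    -- Assumption 2
    (hA2δ : ∀ k i, h * δ k i ≤ 1)
    (hA2B : ∀ k i, h * ∑ j, Bbar k i j ≤ 1)
    -- M(k) = I − hD(k) + hB̄(k)
    (M : ℕ → Matrix (Fin n) (Fin n) ℝ)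
    (hM : ∀ k, M k = 1 - h • Matrix.diagonal (δ k) + h • Bbar k)
    -- sup_k ρ(M(k)) < 1
    (hρ : ∃ r : ℝ, r < 1 ∧ ∀ k, specRad (M k) ≤ r) :
    ∃ α : ℝ, 0 < α ∧ ∃ ω : ℝ, 0 ≤ ω ∧ ω < 1 ∧
      ∀ x : ℕ → Fin n → ℝ,
        (∀ k i, x (k + 1) i =
          x k i + h * ((1 - x k i) * (∑ j, Bbar k i j * x k j) - δ k i * x k i)) →
        ∀ k₀ : ℕ, (∀ i, x k₀ i ∈ Set.Icc (0 : ℝ) 1) →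
          ∀ k, k₀ ≤ k → euclNorm (x k) ≤ α * euclNorm (x k₀) * ω ^ (k - k₀) :=
  sis_homogeneous_GES_general n h hh β A δ Bbar hBbar hAsym hA1δ hA1B hA2δ hA2B M hM hρ
end

section
/- (Nonlinear-term estimate from the proof of Theorem 1) Let Assumptions 1 and 2 hold and let x ∈ [0,1]ⁿ. Writing X = diag(x), B̄ = B̄(k), D = D(k), and M = I − hD + hB̄, one has h² xᵀB̄ᵀX X B̄ x − 2h xᵀB̄ᵀX M x ≤ −h² xᵀB̄ᵀX(I − X)B̄ x ≤ 0. -/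
open Matrix

/-- Nonlinear-term estimate from the proof of Theorem 1: under Assumptions 1 and 2, for
`x ∈ [0,1]ⁿ`, with `X = diag(x)`, `D = diag(δ)` and `M = I − hD + hB̄`, one has
`h²xᵀB̄ᵀXXB̄x − 2h xᵀB̄ᵀXMx ≤ −h² xᵀB̄ᵀX(I − X)B̄x ≤ 0`. -/
theorem sis_nonlinear_term_estimate
    (n : ℕ) (h : ℝ) (hh : 0 < h)
    (δ : Fin n → ℝ) (Bbar : Matrix (Fin n) (Fin n) ℝ)
    -- Assumption 1
    (hA1δ : ∀ i, 0 ≤ h * δ i)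
    (hA1B : ∀ i j, 0 ≤ Bbar i j)
    -- Assumption 2
    (hA2δ : ∀ i, h * δ i ≤ 1)
    (hA2B : ∀ i, h * ∑ j, Bbar i j ≤ 1)
    (x : Fin n → ℝ) (hx : ∀ i, x i ∈ Set.Icc (0 : ℝ) 1)
    (X D M : Matrix (Fin n) (Fin n) ℝ)
    (hX : X = Matrix.diagonal x)
    (hD : D = Matrix.diagonal δ)
    (hM : M = 1 - h • D + h • Bbar) :
    h ^ 2 * (x ⬝ᵥ ((Bbarᵀ * X * X * Bbar) *ᵥ x))
        - 2 * h * (x ⬝ᵥ ((Bbarᵀ * X * M) *ᵥ x))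
      ≤ -(h ^ 2) * (x ⬝ᵥ ((Bbarᵀ * X * (1 - X) * Bbar) *ᵥ x)) ∧
    -(h ^ 2) * (x ⬝ᵥ ((Bbarᵀ * X * (1 - X) * Bbar) *ᵥ x)) ≤ 0 := by
  subst hX hD hM
  set y := Bbar *ᵥ x with hy
  have hy0 : ∀ i, 0 ≤ y i := by
    intro i
    rw [hy]
    simp only [Matrix.mulVec, dotProduct]
    exact Finset.sum_nonneg fun j _ => mul_nonneg (hA1B i j) (hx j).1
  have hdot : ∀ (C : Matrix (Fin n) (Fin n) ℝ) (z : Fin n → ℝ),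
      x ⬝ᵥ ((Bbarᵀ * C) *ᵥ z) = y ⬝ᵥ (C *ᵥ z) := by
    intro C z
    rw [← Matrix.mulVec_mulVec, Matrix.dotProduct_mulVec, Matrix.vecMul_transpose]
  have e1 : x ⬝ᵥ ((Bbarᵀ * diagonal x * diagonal x * Bbar) *ᵥ x)
      = ∑ i, x i ^ 2 * y i ^ 2 := by
    rw [Matrix.mul_assoc, Matrix.mul_assoc, ← Matrix.mul_assoc (diagonal x), hdot,
      Matrix.diagonal_mul_diagonal, ← Matrix.mulVec_mulVec, ← hy]
    simp only [dotProduct, Matrix.mulVec_diagonal]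
    exact Finset.sum_congr rfl fun i _ => by ring
  have e2 : x ⬝ᵥ ((Bbarᵀ * diagonal x * (1 - diagonal x) * Bbar) *ᵥ x)
      = ∑ i, (x i * (1 - x i)) * y i ^ 2 := by
    rw [Matrix.mul_assoc, Matrix.mul_assoc, ← Matrix.mul_assoc (diagonal x), hdot]
    have hdd : diagonal x * (1 - diagonal x) = diagonal (fun i => x i * (1 - x i)) := by
      rw [Matrix.mul_sub, Matrix.mul_one, Matrix.diagonal_mul_diagonal,
        Matrix.diagonal_sub]
      exact congrArg diagonal (funext fun i => by ring)
    rw [hdd, ← Matrix.mulVec_mulVec, ← hy]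
    simp only [dotProduct, Matrix.mulVec_diagonal]
    exact Finset.sum_congr rfl fun i _ => by ring
  have e3 : x ⬝ᵥ ((Bbarᵀ * diagonal x * (1 - h • diagonal δ + h • Bbar)) *ᵥ x)
      = ∑ i, x i * y i * ((1 - h * δ i) * x i + h * y i) := by
    rw [Matrix.mul_assoc, hdot, ← Matrix.mulVec_mulVec]
    simp only [Matrix.add_mulVec, Matrix.sub_mulVec, Matrix.smul_mulVec,
      Matrix.one_mulVec, Matrix.mulVec_diagonal, dotProduct, ← hy,
      Pi.add_apply, Pi.sub_apply, Pi.smul_apply, smul_eq_mul]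
    exact Finset.sum_congr rfl fun i _ => by ring
  rw [e1, e2, e3]
  have key : ∀ i ∈ (Finset.univ : Finset (Fin n)),
      h ^ 2 * (x i ^ 2 * y i ^ 2) - 2 * h * (x i * y i * ((1 - h * δ i) * x i + h * y i))
        ≤ -(h ^ 2 * (x i * (1 - x i) * y i ^ 2)) := by
    intro i _
    have h1 : 0 ≤ x i := (hx i).1
    have h2 : 0 ≤ (1 - h * δ i) * x i := mul_nonneg (by linarith [hA2δ i]) h1
    nlinarith [mul_nonneg hh.le (mul_nonneg (mul_nonneg h2 h1) (hy0 i)),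
      mul_nonneg hh.le (mul_nonneg (mul_nonneg (mul_nonneg hh.le h1) (hy0 i)) (hy0 i))]
  have hSpos : 0 ≤ ∑ i, (x i * (1 - x i)) * y i ^ 2 :=
    Finset.sum_nonneg fun i _ =>
      mul_nonneg (mul_nonneg (hx i).1 (by linarith [(hx i).2])) (sq_nonneg _)
  constructor
  · have h4 : -(h ^ 2) * ∑ i, (x i * (1 - x i)) * y i ^ 2
        = ∑ i, -(h ^ 2 * (x i * (1 - x i) * y i ^ 2)) := by
      rw [Finset.mul_sum]; exact Finset.sum_congr rfl fun i _ => by ring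
    rw [h4, Finset.mul_sum, Finset.mul_sum, ← Finset.sum_sub_distrib]
    exact Finset.sum_le_sum key
  · nlinarith [sq_nonneg h]
end

section
/- (Perturbation bound for discrete Lyapunov solutions, from the proof of Theorem 2) Let M₁, M₂ ∈ ℝ^{n×n} satisfy ‖Mᵢ^F‖ ≤ m p^F for all nonnegative integers F and i = 1,2, with m ≥ 1 and 0 ≤ p < 1, and suppose ‖Mᵢ‖ ≤ L and ‖M₂ − M₁‖ ≤ κ. Let Q₁, Q₂ be the corresponding solutions of the discrete Lyapunov equations MᵢᵀQᵢMᵢ − Qᵢ = −Iₙ. Then the difference satisfies the Lyapunov equation M₂ᵀ(Q₂ − Q₁)M₂ − (Q₂ − Q₁) = −[(M₂ − M₁)ᵀQ₁M₂ + M₁ᵀQ₁(M₂ − M₁)], and consequently ‖Q₂ − Q₁‖ ≤ 2κ L m⁴/(1 − p²)². -/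
/-!
Unrolling a Lyapunov equation `x = c + b x a` gives `x = ∑_{j<N} bʲ c aʲ + bᴺ x aᴺ`; when
`‖bʲ‖ ‖aʲ‖ ≤ K rʲ` with `r < 1` this bounds `‖x‖` by the geometric series `K ‖c‖ / (1 - r)`.
For `Mᵀ Q M - Q = -C` with `‖Mʲ‖ ≤ m pʲ` this is `‖Q‖ ≤ m² ‖C‖ / (1 - p²)`. Subtracting the two
equations shows that `Q₂ - Q₁` solves the equation of `M₂` with a right-hand side of norm at
most `2 κ L ‖Q₁‖`, and bounding `‖Q₁‖` and then `‖Q₂ - Q₁‖` in this way gives the estimate.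
-/

open Matrix Finset Filter

/-- Spectral (induced Euclidean) norm of a real matrix. -/
noncomputable def specNorm {n : ℕ} (M : Matrix (Fin n) (Fin n) ℝ) : ℝ :=
  ‖Matrix.toEuclideanCLM (𝕜 := ℝ) (n := Fin n) M‖

section NormedRing

variable {R : Type*} [NormedRing R] {a b c x : R}

theorem eq_sum_add_of_eq_add_mul_mul (hx : x = c + b * x * a) (N : ℕ) :
    x = ∑ j ∈ range N, b ^ j * c * a ^ j + b ^ N * x * a ^ N := by
  induction N with
  | zero => simp
  | succ N ih =>
    conv_lhs => rw [ih]
    conv_lhs => enter [2]; rw [hx]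
    rw [sum_range_succ, pow_succ b, pow_succ' a]
    noncomm_ring

theorem norm_le_of_eq_add_mul_mul {K r : ℝ} (hr₀ : 0 ≤ r) (hr₁ : r < 1)
    (hpow : ∀ j : ℕ, ‖b ^ j‖ * ‖a ^ j‖ ≤ K * r ^ j) (hx : x = c + b * x * a) :
    ‖x‖ ≤ K / (1 - r) * ‖c‖ := by
  have hconj (y : R) (j : ℕ) : ‖b ^ j * y * a ^ j‖ ≤ K * r ^ j * ‖y‖ :=
    calc ‖b ^ j * y * a ^ j‖ ≤ ‖b ^ j‖ * ‖y‖ * ‖a ^ j‖ := norm_mul₃_le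
      _ = ‖b ^ j‖ * ‖a ^ j‖ * ‖y‖ := by ring
      _ ≤ K * r ^ j * ‖y‖ := mul_le_mul_of_nonneg_right (hpow j) (norm_nonneg y)
  have hK : 0 ≤ K := (mul_nonneg (norm_nonneg _) (norm_nonneg _)).trans (by simpa using hpow 0)
  have hN (N : ℕ) : ‖x‖ ≤ K / (1 - r) * ‖c‖ + K * r ^ N * ‖x‖ :=
    calc ‖x‖ = ‖∑ j ∈ range N, b ^ j * c * a ^ j + b ^ N * x * a ^ N‖ :=
          congrArg _ (eq_sum_add_of_eq_add_mul_mul hx N)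
      _ ≤ ∑ j ∈ range N, K * r ^ j * ‖c‖ + K * r ^ N * ‖x‖ :=
          (norm_add_le _ _).trans <| add_le_add
            ((norm_sum_le _ _).trans (sum_le_sum fun j _ => hconj c j)) (hconj x N)
      _ = K * (∑ j ∈ Ico 0 N, r ^ j) * ‖c‖ + K * r ^ N * ‖x‖ := by
          rw [range_eq_Ico, ← sum_mul, ← mul_sum]
      _ ≤ K * (r ^ 0 / (1 - r)) * ‖c‖ + K * r ^ N * ‖x‖ := by
          gcongr; exact geom_sum_Ico_le_of_lt_one hr₀ hr₁
      _ = K / (1 - r) * ‖c‖ + K * r ^ N * ‖x‖ := by ring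
  have hlim : Tendsto (fun N : ℕ => K / (1 - r) * ‖c‖ + K * r ^ N * ‖x‖) atTop
      (nhds (K / (1 - r) * ‖c‖)) := by
    simpa using tendsto_const_nhds.add
      (((tendsto_pow_atTop_nhds_zero_of_lt_one hr₀ hr₁).const_mul K).mul_const ‖x‖)
  exact ge_of_tendsto' hlim hN

end NormedRing

section SpecNorm

variable {n : ℕ}

theorem specNorm_nonneg (A : Matrix (Fin n) (Fin n) ℝ) : 0 ≤ specNorm A := norm_nonneg _

theorem specNorm_add_le (A B : Matrix (Fin n) (Fin n) ℝ) :
    specNorm (A + B) ≤ specNorm A + specNorm B := by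
  simpa only [specNorm, map_add] using norm_add_le _ _

theorem specNorm_one_le : specNorm (1 : Matrix (Fin n) (Fin n) ℝ) ≤ 1 := by
  simpa only [specNorm, map_one, ContinuousLinearMap.one_def] using ContinuousLinearMap.norm_id_le

theorem toEuclideanCLM_transpose (A : Matrix (Fin n) (Fin n) ℝ) :
    toEuclideanCLM (𝕜 := ℝ) Aᵀ = star (toEuclideanCLM (𝕜 := ℝ) A) := by
  rw [← map_star, star_eq_conjTranspose, conjTranspose_eq_transpose_of_trivial]

theorem specNorm_transpose (A : Matrix (Fin n) (Fin n) ℝ) : specNorm Aᵀ = specNorm A := by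
  rw [specNorm, toEuclideanCLM_transpose, ContinuousLinearMap.star_eq_adjoint,
    LinearIsometryEquiv.norm_map, specNorm]

theorem specNorm_transpose_mul_mul_le (A B C : Matrix (Fin n) (Fin n) ℝ) :
    specNorm (Aᵀ * B * C) ≤ specNorm A * specNorm B * specNorm C := by
  rw [← specNorm_transpose A]
  simpa only [specNorm, map_mul] using norm_mul₃_le

theorem specNorm_le_of_lyapunov {A X C : Matrix (Fin n) (Fin n) ℝ} {m p : ℝ}
    (hp₀ : 0 ≤ p) (hp₁ : p < 1) (hpow : ∀ F : ℕ, specNorm (A ^ F) ≤ m * p ^ F)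
    (h : Aᵀ * X * A - X = -C) :
    specNorm X ≤ m ^ 2 / (1 - p ^ 2) * specNorm C := by
  have hX : X = C + Aᵀ * X * A := by rw [← neg_neg C, ← h]; abel
  refine norm_le_of_eq_add_mul_mul (by positivity) (by nlinarith) (fun j => ?_)
    (by simpa only [map_add, map_mul] using congrArg (toEuclideanCLM (𝕜 := ℝ)) hX)
  rw [← map_pow, ← map_pow, ← transpose_pow]
  change specNorm _ * specNorm _ ≤ _
  rw [specNorm_transpose]
  calc specNorm (A ^ j) * specNorm (A ^ j) ≤ (m * p ^ j) * (m * p ^ j) :=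
        mul_self_le_mul_self (specNorm_nonneg _) (hpow j)
    _ = m ^ 2 * (p ^ 2) ^ j := by ring

end SpecNorm

theorem lyapunov_sub_eq {R : Type*} [Ring R] {a₁ a₂ b₁ b₂ q₁ q₂ c : R}
    (h₁ : b₁ * q₁ * a₁ - q₁ = -c) (h₂ : b₂ * q₂ * a₂ - q₂ = -c) :
    b₂ * (q₂ - q₁) * a₂ - (q₂ - q₁) = -((b₂ - b₁) * q₁ * a₂ + b₁ * q₁ * (a₂ - a₁)) := by
  calc b₂ * (q₂ - q₁) * a₂ - (q₂ - q₁) = (b₂ * q₂ * a₂ - q₂) - (b₁ * q₁ * a₁ - q₁)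
        - ((b₂ - b₁) * q₁ * a₂ + b₁ * q₁ * (a₂ - a₁)) := by noncomm_ring
    _ = _ := by rw [h₁, h₂, sub_neg_eq_add, neg_add_cancel, zero_sub]

theorem discrete_lyapunov_perturbation_general
    (n : ℕ) (M₁ M₂ Q₁ Q₂ : Matrix (Fin n) (Fin n) ℝ)
    (m p L κ : ℝ) (hp0 : 0 ≤ p) (hp1 : p < 1)
    (hpow1 : ∀ F : ℕ, specNorm (M₁ ^ F) ≤ m * p ^ F)
    (hpow2 : ∀ F : ℕ, specNorm (M₂ ^ F) ≤ m * p ^ F)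
    (hL1 : specNorm M₁ ≤ L) (hL2 : specNorm M₂ ≤ L)
    (hκ : specNorm (M₂ - M₁) ≤ κ)
    (hQ1 : M₁ᵀ * Q₁ * M₁ - Q₁ = -1)
    (hQ2 : M₂ᵀ * Q₂ * M₂ - Q₂ = -1) :
    (M₂ᵀ * (Q₂ - Q₁) * M₂ - (Q₂ - Q₁) =
      -((M₂ - M₁)ᵀ * Q₁ * M₂ + M₁ᵀ * Q₁ * (M₂ - M₁))) ∧
    specNorm (Q₂ - Q₁) ≤ 2 * κ * L * m ^ 4 / (1 - p ^ 2) ^ 2 := by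
  have hdiff := transpose_sub M₂ M₁ ▸ lyapunov_sub_eq hQ1 hQ2
  refine ⟨hdiff, ?_⟩
  set q := m ^ 2 / (1 - p ^ 2)
  have hq : 0 ≤ q := div_nonneg (sq_nonneg m) (by nlinarith)
  have hQ₁ : specNorm Q₁ ≤ q := by
    simpa using (specNorm_le_of_lyapunov hp0 hp1 hpow1 hQ1).trans
      (mul_le_of_le_one_right hq specNorm_one_le)
  have hκ₀ : 0 ≤ κ := (specNorm_nonneg _).trans hκ
  have hL₀ : 0 ≤ L := (specNorm_nonneg _).trans hL2
  have hC : specNorm ((M₂ - M₁)ᵀ * Q₁ * M₂ + M₁ᵀ * Q₁ * (M₂ - M₁)) ≤ 2 * κ * L * q :=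
    calc _ ≤ specNorm (M₂ - M₁) * specNorm Q₁ * specNorm M₂
            + specNorm M₁ * specNorm Q₁ * specNorm (M₂ - M₁) :=
          (specNorm_add_le _ _).trans
            (add_le_add (specNorm_transpose_mul_mul_le _ _ _) (specNorm_transpose_mul_mul_le _ _ _))
      _ ≤ κ * q * L + L * q * κ := by
          gcongr <;> first | assumption | exact specNorm_nonneg _
      _ = 2 * κ * L * q := by ring
  calc specNorm (Q₂ - Q₁) ≤ q * specNorm ((M₂ - M₁)ᵀ * Q₁ * M₂ + M₁ᵀ * Q₁ * (M₂ - M₁)) :=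
        specNorm_le_of_lyapunov hp0 hp1 hpow2 hdiff
    _ ≤ q * (2 * κ * L * q) := by gcongr
    _ = 2 * κ * L * m ^ 4 / (1 - p ^ 2) ^ 2 := by simp only [q]; field_simp

/-- Perturbation bound for discrete Lyapunov solutions, from the proof of Theorem 2:
if `‖Mᵢ^F‖ ≤ m p^F`, `‖Mᵢ‖ ≤ L`, `‖M₂ − M₁‖ ≤ κ`, and `Qᵢ` solve
`MᵢᵀQᵢMᵢ − Qᵢ = −Iₙ`, then `Q₂ − Q₁` satisfies the Lyapunov equation
`M₂ᵀ(Q₂ − Q₁)M₂ − (Q₂ − Q₁) = −[(M₂ − M₁)ᵀQ₁M₂ + M₁ᵀQ₁(M₂ − M₁)]`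
and `‖Q₂ − Q₁‖ ≤ 2κLm⁴/(1 − p²)²`. -/
theorem discrete_lyapunov_perturbation
    (n : ℕ) (M₁ M₂ Q₁ Q₂ : Matrix (Fin n) (Fin n) ℝ)
    (m p L κ : ℝ) (hm : 1 ≤ m) (hp0 : 0 ≤ p) (hp1 : p < 1)
    (hpow1 : ∀ F : ℕ, specNorm (M₁ ^ F) ≤ m * p ^ F)
    (hpow2 : ∀ F : ℕ, specNorm (M₂ ^ F) ≤ m * p ^ F)
    (hL1 : specNorm M₁ ≤ L) (hL2 : specNorm M₂ ≤ L)
    (hκ : specNorm (M₂ - M₁) ≤ κ)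
    (hQ1 : M₁ᵀ * Q₁ * M₁ - Q₁ = -1)
    (hQ2 : M₂ᵀ * Q₂ * M₂ - Q₂ = -1) :
    (M₂ᵀ * (Q₂ - Q₁) * M₂ - (Q₂ - Q₁) =
      -((M₂ - M₁)ᵀ * Q₁ * M₂ + M₁ᵀ * Q₁ * (M₂ - M₁))) ∧
    specNorm (Q₂ - Q₁) ≤ 2 * κ * L * m ^ 4 / (1 - p ^ 2) ^ 2 :=
  discrete_lyapunov_perturbation_general n M₁ M₂ Q₁ Q₂ m p L κ hp0 hp1 hpow1 hpow2 hL1 hL2 hκ hQ1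
    hQ2
end

section
/- (Eradication at saturated healing rates, used in the proofs of Theorems 3 and 4) Consider the SIS model x(k+1) = x(k) + h((I − X(k))B̄(k) − D(k))x(k) with hδ_i(k) = 1 for all i ∈ [n] and all k ∈ ℤ≥0 (so that M(k) = hB̄(k)), homogeneous infection rates β_i(k) = β(k) > 0, A(k) symmetric and entrywise nonnegative for all k, and suppose sup_{k ∈ ℤ≥0} max_i hβ(k)∑_j a_ij(k) < 1. Then the healthy state x = 0 is globally exponentially stable: there exist α > 0 and ω ∈ [0,1) such that every solution with x(k₀) ∈ [0,1]ⁿ satisfies ‖x(k)‖ ≤ α‖x(k₀)‖ω^{k−k₀} for all k ≥ k₀. -/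
/-- Eradication at saturated healing rates, used in the proofs of Theorems 3 and 4:
for the SIS model with `hδ_i(k) = 1` for all `i, k` (so `M(k) = hB̄(k)`), homogeneous
infection rates `β_i(k) = β(k) > 0`, symmetric entrywise-nonnegative `A(k)`, and
`sup_k max_i hβ(k)∑_j a_ij(k) < 1`, the healthy state is GES. -/
theorem sis_saturated_healing_GES
    (n : ℕ) (h : ℝ) (hh : 0 < h)
    (β : ℕ → ℝ) (A : ℕ → Matrix (Fin n) (Fin n) ℝ) (δ : ℕ → Fin n → ℝ)
    -- saturated healing rates: hδ_i(k) = 1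
    (hδ : ∀ k i, h * δ k i = 1)
    -- homogeneous positive infection rates
    (hβpos : ∀ k, 0 < β k)
    -- A(k) symmetric with nonnegative entries
    (hAsym : ∀ k, (A k).IsSymm)
    (hAnonneg : ∀ k i j, 0 ≤ A k i j)
    -- sup_k max_i hβ(k)∑_j a_ij(k) < 1
    (hrow : ∃ r : ℝ, r < 1 ∧ ∀ k i, h * β k * ∑ j, A k i j ≤ r) :
    ∃ α : ℝ, 0 < α ∧ ∃ ω : ℝ, 0 ≤ ω ∧ ω < 1 ∧
      ∀ x : ℕ → Fin n → ℝ,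
        (∀ k i, x (k + 1) i =
          x k i + h * ((1 - x k i) * β k * (∑ j, A k i j * x k j) - δ k i * x k i)) →
        ∀ k₀ : ℕ, (∀ i, x k₀ i ∈ Set.Icc (0 : ℝ) 1) →
          ∀ k, k₀ ≤ k → euclNorm (x k) ≤ α * euclNorm (x k₀) * ω ^ (k - k₀) := by
  obtain ⟨r, hr1, hr⟩ := hrow
  refine ⟨Real.sqrt n + 1, by positivity, max r 0, le_max_right _ _,
    max_lt hr1 one_pos, ?_⟩
  intro x hx k₀ hx0 k hk
  set ω := max r 0 with hωdef
  set E := euclNorm (x k₀) with hEdef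
  have hE0 : 0 ≤ E := Real.sqrt_nonneg _
  have hω0 : 0 ≤ ω := le_max_right _ _
  have hrω : r ≤ ω := le_max_left _ _
  have hle : ∀ i, x k₀ i ≤ E := by
    intro i
    have h1 : (x k₀ i) ^ 2 ≤ ∑ j, (x k₀ j) ^ 2 :=
      Finset.single_le_sum (f := fun j => (x k₀ j) ^ 2) (fun j _ => sq_nonneg _) (Finset.mem_univ i)
    calc x k₀ i ≤ |x k₀ i| := le_abs_self _
      _ = Real.sqrt ((x k₀ i) ^ 2) := (Real.sqrt_sq_eq_abs _).symm
      _ ≤ E := Real.sqrt_le_sqrt h1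
  have key : ∀ m, ∀ i, 0 ≤ x (k₀ + m) i ∧ x (k₀ + m) i ≤ 1 ∧
      x (k₀ + m) i ≤ ω ^ m * E := by
    intro m
    induction m with
    | zero =>
        intro i
        exact ⟨(hx0 i).1, (hx0 i).2, by simpa using hle i⟩
    | succ m ih =>
        intro i
        have hβ := hβpos (k₀ + m)
        have hform : x (k₀ + m + 1) i
            = h * ((1 - x (k₀ + m) i) * β (k₀ + m)
                * ∑ j, A (k₀ + m) i j * x (k₀ + m) j) := by
          rw [hx (k₀ + m) i]
          linear_combination (-(x (k₀ + m) i)) * hδ (k₀ + m) i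
        have h1x : 0 ≤ 1 - x (k₀ + m) i := by linarith [(ih i).2.1]
        have h1x' : 1 - x (k₀ + m) i ≤ 1 := by linarith [(ih i).1]
        have hSnn : 0 ≤ ∑ j, A (k₀ + m) i j * x (k₀ + m) j :=
          Finset.sum_nonneg fun j _ => mul_nonneg (hAnonneg _ _ _) (ih j).1
        have hnn : 0 ≤ x (k₀ + m + 1) i := by
          rw [hform]
          exact mul_nonneg hh.le (mul_nonneg (mul_nonneg h1x hβ.le) hSnn)
        -- bound the sum by (row sum) * (uniform bound)
        have hSbound : ∀ c : ℝ, (∀ j, x (k₀ + m) j ≤ c) →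
            ∑ j, A (k₀ + m) i j * x (k₀ + m) j ≤ (∑ j, A (k₀ + m) i j) * c := by
          intro c hc
          rw [Finset.sum_mul]
          exact Finset.sum_le_sum fun j _ =>
            mul_le_mul_of_nonneg_left (hc j) (hAnonneg _ _ _)
        have hgen : ∀ c : ℝ, 0 ≤ c → (∀ j, x (k₀ + m) j ≤ c) →
            x (k₀ + m + 1) i ≤ r * c := by
          intro c hc hcb
          rw [hform]
          have h1 : (1 - x (k₀ + m) i) * β (k₀ + m)
              * ∑ j, A (k₀ + m) i j * x (k₀ + m) j
              ≤ β (k₀ + m) * ((∑ j, A (k₀ + m) i j) * c) := by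
            calc (1 - x (k₀ + m) i) * β (k₀ + m)
                  * ∑ j, A (k₀ + m) i j * x (k₀ + m) j
                ≤ 1 * β (k₀ + m) * ∑ j, A (k₀ + m) i j * x (k₀ + m) j := by
                  apply mul_le_mul_of_nonneg_right _ hSnn
                  exact mul_le_mul_of_nonneg_right h1x' hβ.le
              _ = β (k₀ + m) * ∑ j, A (k₀ + m) i j * x (k₀ + m) j := by ring
              _ ≤ β (k₀ + m) * ((∑ j, A (k₀ + m) i j) * c) :=
                  mul_le_mul_of_nonneg_left (hSbound c hcb) hβ.le
          have h2 : h * (β (k₀ + m) * ((∑ j, A (k₀ + m) i j) * c)) ≤ r * c := by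
            have := hr (k₀ + m) i
            have h3 : h * β (k₀ + m) * (∑ j, A (k₀ + m) i j) * c ≤ r * c :=
              mul_le_mul_of_nonneg_right this hc
            linarith [h3]
          calc h * ((1 - x (k₀ + m) i) * β (k₀ + m)
                * ∑ j, A (k₀ + m) i j * x (k₀ + m) j)
              ≤ h * (β (k₀ + m) * ((∑ j, A (k₀ + m) i j) * c)) :=
                mul_le_mul_of_nonneg_left h1 hh.le
            _ ≤ r * c := h2
        have hle1 : x (k₀ + m + 1) i ≤ 1 := by
          have := hgen 1 one_pos.le fun j => (ih j).2.1
          calc x (k₀ + m + 1) i ≤ r * 1 := this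
            _ ≤ 1 := by linarith
        have hdec : x (k₀ + m + 1) i ≤ ω ^ (m + 1) * E := by
          have hc0 : 0 ≤ ω ^ m * E := mul_nonneg (pow_nonneg hω0 m) hE0
          have := hgen (ω ^ m * E) hc0 fun j => (ih j).2.2
          calc x (k₀ + m + 1) i ≤ r * (ω ^ m * E) := this
            _ ≤ ω * (ω ^ m * E) := mul_le_mul_of_nonneg_right hrω hc0
            _ = ω ^ (m + 1) * E := by ring
        exact ⟨hnn, hle1, hdec⟩
  -- conclude
  obtain ⟨m, rfl⟩ := Nat.exists_eq_add_of_le hk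
  have hm : k₀ + m - k₀ = m := by omega
  rw [hm]
  have hc0 : 0 ≤ ω ^ m * E := mul_nonneg (pow_nonneg hω0 m) hE0
  have hsq : ∀ i, (x (k₀ + m) i) ^ 2 ≤ (ω ^ m * E) ^ 2 := by
    intro i
    have h1 := (key m i).1
    have h2 := (key m i).2.2
    nlinarith
  have hsum : ∑ i, (x (k₀ + m) i) ^ 2 ≤ (n : ℝ) * (ω ^ m * E) ^ 2 := by
    calc ∑ i, (x (k₀ + m) i) ^ 2 ≤ ∑ _i : Fin n, (ω ^ m * E) ^ 2 :=
          Finset.sum_le_sum fun i _ => hsq i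
      _ = (n : ℝ) * (ω ^ m * E) ^ 2 := by simp [Finset.sum_const]
  calc euclNorm (x (k₀ + m)) ≤ Real.sqrt ((n : ℝ) * (ω ^ m * E) ^ 2) :=
        Real.sqrt_le_sqrt hsum
    _ = Real.sqrt n * (ω ^ m * E) := by
        rw [Real.sqrt_mul (Nat.cast_nonneg n), Real.sqrt_sq hc0]
    _ ≤ (Real.sqrt n + 1) * E * ω ^ m := by nlinarith [Real.sqrt_nonneg (n : ℝ)]
end
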